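/- Let G be a finite directed graph with zero reciprocity and no triangles (no vertex triple u,v,w with (u,v),(v,w),(u,w) all in E). Then for all vertices u,v,w with (u,v),(v,w) ∈ E, the Node2vec second-order transition probability from v to w given previous vertex u equals the first-order random-walk transition probability from v to w: P̲(u,v,w) = P(v,w), where P(v,w) = 1/outdeg(v) if (v,w) ∈ E and 0 otherwise, and P̲(u,v,w) = T(u→v→w)/Σ_{w'} T(u→v→w'). -/

import Mathlib

open Finset

/-- Node2vec unnormalized second-order transition weight. -/
noncomputable def n2vWeight {V : Type*} [DecidableEq V] (E : V → V → Prop) [DecidableRel E]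
    (p q : ℝ) (u v w : V) : ℝ :=
  if E u v ∧ E v w then
    if u = w then 1 / p
    else if E u w then 1
    else 1 / q
  else 0

/-- Out-degree in a finite directed graph. -/
def outdeg {V : Type*} [Fintype V] (E : V → V → Prop) [DecidableRel E] (v : V) : ℕ :=
  (Finset.univ.filter (fun w => E v w)).card

/-- First-order random-walk transition probability. -/
noncomputable def rwProb {V : Type*} [Fintype V] (E : V → V → Prop) [DecidableRel E]
    (v w : V) : ℝ :=
  if E v w then 1 / (outdeg E v : ℝ) else 0

/-- Node2vec second-order transition probability. -/
noncomputable def n2vProb {V : Type*} [Fintype V] [DecidableEq V]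
    (E : V → V → Prop) [DecidableRel E] (p q : ℝ) (u v w : V) : ℝ :=
  n2vWeight E p q u v w / ∑ w' : V, n2vWeight E p q u v w'

theorem n2vWeight_eq_ite_of_no_return {V : Type*} [DecidableEq V] (E : V → V → Prop)
    [DecidableRel E] (p q : ℝ) {u v : V} (huv : E u v) (hvu : ¬ E v u)
    (hshortcut : ∀ w, E v w → ¬ E u w) (w : V) :
    n2vWeight E p q u v w = if E v w then 1 / q else 0 := by
  by_cases hvw : E v w
  · have hne : u ≠ w := by
      rintro rfl
      exact hvu hvw
    simp [n2vWeight, huv, hvw, hne, hshortcut w hvw]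
  · simp [n2vWeight, hvw]

theorem sum_ite_adj_const {V : Type*} [Fintype V] (E : V → V → Prop) [DecidableRel E]
    (v : V) (c : ℝ) : ∑ w : V, (if E v w then c else 0) = outdeg E v * c := by
  rw [← Finset.sum_filter, Finset.sum_const, nsmul_eq_mul, outdeg]

theorem n2vProb_eq_rwProb_of_uniform_weight {V : Type*} [Fintype V] [DecidableEq V]
    (E : V → V → Prop) [DecidableRel E] (p q : ℝ) {u v : V} {c : ℝ} (hc : c ≠ 0)
    (hdeg : 0 < outdeg E v) (hweight : ∀ w, n2vWeight E p q u v w = if E v w then c else 0)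
    (w : V) : n2vProb E p q u v w = rwProb E v w := by
  have hdeg' : (outdeg E v : ℝ) ≠ 0 := by exact_mod_cast hdeg.ne'
  simp only [n2vProb, rwProb, hweight, sum_ite_adj_const]
  split_ifs
  · field_simp
  · simp

theorem n2v_reduces_to_first_order_general {V : Type*} [Fintype V] [DecidableEq V]
    (E : V → V → Prop) [DecidableRel E] (p q : ℝ) (hq : 0 < q)
    (hout : ∀ v, (∃ u, E u v) → 0 < outdeg E v)
    (hrec : ∀ u v, E u v → ¬ E v u)
    (htri : ∀ u v w, E u v → E v w → ¬ E u w) :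
    ∀ u v w, E u v → E v w → n2vProb E p q u v w = rwProb E v w := by
  intro u v w huv _
  refine n2vProb_eq_rwProb_of_uniform_weight E p q (one_div_ne_zero hq.ne') (hout v ⟨u, huv⟩)
    (fun w' => ?_) w
  exact n2vWeight_eq_ite_of_no_return E p q huv (hrec u v huv) (htri u v · huv) w'

theorem n2v_reduces_to_first_order {V : Type*} [Fintype V] [DecidableEq V]
    (E : V → V → Prop) [DecidableRel E] (p q : ℝ) (hp : 0 < p) (hq : 0 < q)
    (hout : ∀ v, (∃ u, E u v) → 0 < outdeg E v)
    (hrec : ∀ u v, E u v → ¬ E v u)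
    (htri : ∀ u v w, E u v → E v w → ¬ E u w) :
    ∀ u v w, E u v → E v w → n2vProb E p q u v w = rwProb E v w :=
  n2v_reduces_to_first_order_general E p q hq hout hrec htri
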